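/- (Approximate midpoints in asymptotically p-uniformly smooth spaces) Let X be asymptotically p-uniformly smooth, p ∈ (1,∞). There is c > 0 such that for all x, y ∈ X, all δ > 0, and every weakly null sequence (x_n) in B_X, there exists n₀ such that for all n > n₀: u + δ^{1/p}‖v‖ x_n ∈ Mid(x, y, cδ), where u = (x+y)/2, v = (x−y)/2. -/

import Mathlib

open Filter Topology Metric Set Pointwise

noncomputable section

namespace CLG

variable {X Y : Type*}

/-- The expansion modulus `ω_f`. -/
def expansionMod [PseudoMetricSpace X] [PseudoMetricSpace Y] (f : X → Y) (t : ℝ) : ℝ :=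
  sSup {r : ℝ | ∃ x y : X, dist x y ≤ t ∧ r = dist (f x) (f y)}

/-- The compression modulus `ρ_f`. -/
def compressionMod [PseudoMetricSpace X] [PseudoMetricSpace Y] (f : X → Y) (t : ℝ) : ℝ :=
  sInf {r : ℝ | ∃ x y : X, t ≤ dist x y ∧ r = dist (f x) (f y)}

/-- `f` is a coarse map: `ω_f(t) < ∞` for every `t`. -/
def IsCoarseMap [PseudoMetricSpace X] [PseudoMetricSpace Y] (f : X → Y) : Prop :=
  ∀ t : ℝ, ∃ C : ℝ, ∀ x y : X, dist x y ≤ t → dist (f x) (f y) ≤ C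

/-- `f` is a coarse embedding: a coarse map with `ρ_f(t) → ∞`. -/
def IsCoarseEmbedding [PseudoMetricSpace X] [PseudoMetricSpace Y] (f : X → Y) : Prop :=
  IsCoarseMap f ∧ ∀ M : ℝ, ∃ t : ℝ, ∀ x y : X, t ≤ dist x y → M ≤ dist (f x) (f y)

/-- `f` is a uniform embedding: `ω_f(t) → 0` as `t → 0` and `ρ_f(t) > 0` for `t > 0`. -/
def IsUniformEmbeddingMap [PseudoMetricSpace X] [PseudoMetricSpace Y] (f : X → Y) : Prop :=
  (∀ ε > (0:ℝ), ∃ δ > (0:ℝ), ∀ x y : X, dist x y ≤ δ → dist (f x) (f y) ≤ ε) ∧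
  (∀ t > (0:ℝ), ∃ r > (0:ℝ), ∀ x y : X, t ≤ dist x y → r ≤ dist (f x) (f y))

/-- `f` is a coarse Lipschitz embedding. -/
def IsCoarseLipschitzEmbedding [PseudoMetricSpace X] [PseudoMetricSpace Y] (f : X → Y) : Prop :=
  ∃ L : ℝ, 0 < L ∧ ∀ x y : X,
    dist (f x) (f y) ≤ L * dist x y + L ∧ L⁻¹ * dist x y - L ≤ dist (f x) (f y)

def CoarseLipschitzEmbeds (X Y : Type*) [PseudoMetricSpace X] [PseudoMetricSpace Y] : Prop :=
  ∃ f : X → Y, IsCoarseLipschitzEmbedding f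

/-- The set of exponents `α > 0` admitting a coarse embedding `f : X → Y` with
`ρ_f(t) ≥ L⁻¹ t^α − L`. -/
def compressionSet (X Y : Type*) [NormedAddCommGroup X] [NormedAddCommGroup Y] : Set ℝ :=
  {α : ℝ | 0 < α ∧ ∃ f : X → Y, IsCoarseMap f ∧ ∃ L : ℝ, 0 < L ∧
    ∀ x y : X, L⁻¹ * ‖x - y‖ ^ α - L ≤ ‖f x - f y‖}

/-- The compression exponent `α_Y(X)` (note the argument order: `compressionExp X Y = α_Y(X)`).
By convention `sSup ∅ = 0`, matching `α_Y(X) = 0` when no such embedding exists. -/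
def compressionExp (X Y : Type*) [NormedAddCommGroup X] [NormedAddCommGroup Y] : ℝ :=
  sSup (compressionSet X Y)

/-- The modulus of asymptotic uniform smoothness `ρ̄_X(t)`. -/
def ausModulus (X : Type*) [NormedAddCommGroup X] [NormedSpace ℝ X] (t : ℝ) : ℝ :=
  ⨆ x : {x : X // ‖x‖ = 1},
    ⨅ E : {E : Submodule ℝ X // FiniteDimensional ℝ (X ⧸ E)},
      ⨆ h : {h : X // h ∈ E.1 ∧ ‖h‖ = 1}, (‖x.1 + t • h.1‖ - 1)

/-- The modulus of asymptotic uniform convexity `δ̄_X(t)`. -/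
def aucModulus (X : Type*) [NormedAddCommGroup X] [NormedSpace ℝ X] (t : ℝ) : ℝ :=
  ⨅ x : {x : X // ‖x‖ = 1},
    ⨆ E : {E : Submodule ℝ X // FiniteDimensional ℝ (X ⧸ E)},
      ⨅ h : {h : X // h ∈ E.1 ∧ ‖h‖ = 1}, (‖x.1 + t • h.1‖ - 1)

/-- Asymptotically uniformly smooth: `ρ̄_X(t)/t → 0` as `t → 0⁺`. -/
def AsympUniformlySmooth (X : Type*) [NormedAddCommGroup X] [NormedSpace ℝ X] : Prop :=
  Tendsto (fun t => ausModulus X t / t) (𝓝[>] (0:ℝ)) (𝓝 0)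

/-- Asymptotically `p`-uniformly smooth: `ρ̄_X(t) ≤ C t^p` on `[0,1]`. -/
def AsympPUnifSmooth (X : Type*) [NormedAddCommGroup X] [NormedSpace ℝ X] (p : ℝ) : Prop :=
  ∃ C > (0:ℝ), ∀ t ∈ Set.Icc (0:ℝ) 1, ausModulus X t ≤ C * t ^ p

/-- Asymptotically `p`-uniformly convex: `δ̄_X(t) ≥ C t^p` on `[0,1]`. -/
def AsympPUnifConvex (X : Type*) [NormedAddCommGroup X] [NormedSpace ℝ X] (p : ℝ) : Prop :=
  ∃ C > (0:ℝ), ∀ t ∈ Set.Icc (0:ℝ) 1, C * t ^ p ≤ aucModulus X t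

/-- Reflexivity of a Banach space: the canonical embedding into the double dual is onto. -/
def BanachReflexive (X : Type*) [NormedAddCommGroup X] [NormedSpace ℝ X] : Prop :=
  Function.Surjective (NormedSpace.inclusionInDoubleDual ℝ X)

/-- A weakly null sequence. -/
def WeaklyNull [NormedAddCommGroup X] [NormedSpace ℝ X] (x : ℕ → X) : Prop :=
  ∀ φ : X →L[ℝ] ℝ, Tendsto (fun n => φ (x n)) atTop (𝓝 0)

/-- A semi-normalized sequence. -/
def SemiNormalized [NormedAddCommGroup X] (x : ℕ → X) : Prop :=
  ∃ a b : ℝ, 0 < a ∧ ∀ n, a ≤ ‖x n‖ ∧ ‖x n‖ ≤ b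

/-- The Banach-Saks property. -/
def BanachSaksProp (X : Type*) [NormedAddCommGroup X] [NormedSpace ℝ X] : Prop :=
  ∀ x : ℕ → X, (∃ b : ℝ, ∀ n, ‖x n‖ ≤ b) → ∃ φ : ℕ → ℕ, StrictMono φ ∧ ∃ L : X,
    Tendsto (fun k : ℕ => (k:ℝ)⁻¹ • ∑ j ∈ Finset.range k, x (φ j)) atTop (𝓝 L)

/-- The alternating Banach-Saks property. -/
def AltBanachSaks (X : Type*) [NormedAddCommGroup X] [NormedSpace ℝ X] : Prop :=
  ∀ x : ℕ → X, (∃ b : ℝ, ∀ n, ‖x n‖ ≤ b) → ∃ φ : ℕ → ℕ, StrictMono φ ∧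
    ∃ ε : ℕ → ℝ, (∀ j, ε j = 1 ∨ ε j = -1) ∧ ∃ L : X,
      Tendsto (fun k : ℕ => (k:ℝ)⁻¹ • ∑ j ∈ Finset.range k, ε j • x (φ j)) atTop (𝓝 L)

/-- The `p`-Banach-Saks property. -/
def PBanachSaks (X : Type*) [NormedAddCommGroup X] [NormedSpace ℝ X] (p : ℝ) : Prop :=
  ∀ x : ℕ → X, SemiNormalized x → WeaklyNull x →
    ∃ φ : ℕ → ℕ, StrictMono φ ∧ ∃ c > (0:ℝ), ∀ (k : ℕ) (n : Fin k → ℕ),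
      StrictMono n → (∀ i, k ≤ n i) → ‖∑ i, x (φ (n i))‖ ≤ c * (k : ℝ) ^ (1 / p)

/-- The `p`-co-Banach-Saks property. -/
def PCoBanachSaks (X : Type*) [NormedAddCommGroup X] [NormedSpace ℝ X] (p : ℝ) : Prop :=
  ∀ x : ℕ → X, SemiNormalized x → WeaklyNull x →
    ∃ φ : ℕ → ℕ, StrictMono φ ∧ ∃ c > (0:ℝ), ∀ (k : ℕ) (n : Fin k → ℕ),
      StrictMono n → (∀ i, k ≤ n i) → c * (k : ℝ) ^ (1 / p) ≤ ‖∑ i, x (φ (n i))‖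

/-- The almost `p`-co-Banach-Saks property. -/
def AlmostPCoBanachSaks (X : Type*) [NormedAddCommGroup X] [NormedSpace ℝ X] (p : ℝ) : Prop :=
  ∀ x : ℕ → X, SemiNormalized x → WeaklyNull x →
    ∃ φ : ℕ → ℕ, StrictMono φ ∧ ∃ θ : ℕ → ℝ, (∀ j, 1 ≤ θ j) ∧
      (∀ α > (0:ℝ), Tendsto (fun j : ℕ => (j:ℝ) ^ α / θ j) atTop atTop) ∧
      ∀ (k : ℕ) (n : Fin k → ℕ), StrictMono n → (∀ i, k ≤ n i) →
        (k:ℝ) ^ (1 / p) / θ k ≤ ‖∑ i, x (φ (n i))‖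

/-- `X` contains an isomorphic copy of `ℓ₁`, witnessed by a sequence equivalent to the
unit vector basis of `ℓ₁`. -/
def ContainsL1Copy (X : Type*) [NormedAddCommGroup X] [NormedSpace ℝ X] : Prop :=
  ∃ (x : ℕ → X) (c C : ℝ), 0 < c ∧ 0 < C ∧ ∀ (k : ℕ) (a : Fin k → ℝ),
    c * (∑ i, |a i|) ≤ ‖∑ i, a i • x i.1‖ ∧ ‖∑ i, a i • x i.1‖ ≤ C * ∑ i, |a i|

/-- The set of approximate midpoints of `x` and `y` with error `δ`. -/
def Mid [PseudoMetricSpace X] (x y : X) (δ : ℝ) : Set X :=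
  {z : X | max (dist x z) (dist y z) ≤ (1 + δ) / 2 * dist x y}

/-- `Lip_s(f) = sup_{t ≥ s} ω_f(t)/t`. -/
def lipAt [PseudoMetricSpace X] [PseudoMetricSpace Y] (f : X → Y) (s : ℝ) : ℝ :=
  ⨆ t : {t : ℝ // s ≤ t}, expansionMod f t.1 / t.1

/-- `Lip_∞(f) = inf_{s > 0} Lip_s(f)`. -/
def lipInfty [PseudoMetricSpace X] [PseudoMetricSpace Y] (f : X → Y) : ℝ :=
  ⨅ s : {s : ℝ // 0 < s}, lipAt f s.1

end CLG

open CLG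

/-! Write `v = (x - y)/2` and `τ = δ^{1/p}`; membership in `Mid x y (cδ)` amounts to
`‖v ± τ‖v‖ z n‖ ≤ (1 + cδ)‖v‖`. For `δ ≥ 1` the triangle inequality suffices. For `δ < 1`,
normalise `v` to a unit vector `x̂`: since `ρ̄_X(τ) ≤ Cτ^p = Cδ`, some finite-codimensional
subspace `E` satisfies `‖x̂ + τh‖ ≤ 1 + Cδ + ε` on its unit sphere, hence, by convexity of the
norm, on its unit ball. A weakly null sequence is eventually arbitrarily close to `E` (its image in
the finite-dimensional quotient by the closure of `E` tends to `0` in norm), hence to the unit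
ball of `E`, which gives the bound with `c = C + 1`. -/

theorem Submodule.exists_mem_norm_le_one_norm_sub_le {X : Type*} [NormedAddCommGroup X]
    [NormedSpace ℝ X] (E : Submodule ℝ X) {w h : X} (hw : ‖w‖ ≤ 1) (hh : h ∈ E) :
    ∃ u ∈ E, ‖u‖ ≤ 1 ∧ ‖w - u‖ ≤ 2 * ‖w - h‖ := by
  by_cases hh1 : ‖h‖ ≤ 1
  · exact ⟨h, hh, hh1, by linarith [norm_nonneg (w - h)]⟩
  have hh0 : h ≠ 0 := norm_pos_iff.1 (by linarith)
  have hu : ‖h - ‖h‖⁻¹ • h‖ = ‖h‖ - 1 := by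
    have h1 : 1 ≤ ‖h‖ := by linarith
    rw [show h - ‖h‖⁻¹ • h = (1 - ‖h‖⁻¹) • h by rw [sub_smul, one_smul], norm_smul,
      Real.norm_of_nonneg (sub_nonneg.2 (inv_le_one_of_one_le₀ h1))]
    field_simp
  refine ⟨‖h‖⁻¹ • h, E.smul_mem _ hh, (norm_smul_inv_norm hh0).le, ?_⟩
  calc ‖w - ‖h‖⁻¹ • h‖ ≤ ‖w - h‖ + ‖h - ‖h‖⁻¹ • h‖ := norm_sub_le_norm_sub_add_norm_sub _ _ _
    _ ≤ 2 * ‖w - h‖ := by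
      rw [hu]
      linarith [norm_sub_norm_le h w, norm_sub_rev h w]

namespace CLG

variable {X : Type*} [NormedAddCommGroup X] [NormedSpace ℝ X] {z : ℕ → X}

theorem WeaklyNull.neg (hz : WeaklyNull z) : WeaklyNull (-z) := fun φ => by
  simpa using (hz φ).neg

theorem WeaklyNull.tendsto_apply_of_finiteDimensional {V : Type*} [NormedAddCommGroup V]
    [NormedSpace ℝ V] [FiniteDimensional ℝ V] (hz : WeaklyNull z) (T : X →L[ℝ] V) :
    Tendsto (fun n => T (z n)) atTop (𝓝 0) := by
  let e := (Module.finBasis ℝ V).equivFunL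
  have hcoord : Tendsto (fun n => e (T (z n))) atTop (𝓝 0) :=
    tendsto_pi_nhds.2 fun i => by
      simpa using hz ((ContinuousLinearMap.proj (R := ℝ) (φ := fun _ => ℝ) i).comp
        ((e : V →L[ℝ] _).comp T))
  simpa [Function.comp_def] using (e.symm.continuous.tendsto 0).comp hcoord

theorem WeaklyNull.tendsto_infDist (hz : WeaklyNull z) (E : Submodule ℝ X)
    [FiniteDimensional ℝ (X ⧸ E)] :
    Tendsto (fun n => infDist (z n) E) atTop (𝓝 0) := by
  -- `E` need not be closed; pass to its closure, whose quotient is a finite-dimensional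
  -- normed space with `‖[z n]‖ = infDist (z n) E`.
  let F := E.topologicalClosure
  have : IsClosed (F : Set X) := E.isClosed_topologicalClosure
  have : FiniteDimensional ℝ (X ⧸ F) := Submodule.CoFG.of_le E.le_topologicalClosure ‹_›
  have hF := (hz.tendsto_apply_of_finiteDimensional F.mkQL).norm
  rw [norm_zero] at hF
  convert hF using 2 with n
  rw [Submodule.mkQL_apply, Submodule.mkQ_apply, ← infDist_closure]
  exact (QuotientAddGroup.norm_mk (S := F.toAddSubgroup) (z n)).symm

theorem WeaklyNull.eventually_exists_mem_norm_sub_lt (hz : WeaklyNull z) (E : Submodule ℝ X)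
    [FiniteDimensional ℝ (X ⧸ E)] {ε : ℝ} (hε : 0 < ε) :
    ∀ᶠ n in atTop, ∃ h ∈ E, ‖z n - h‖ < ε := by
  filter_upwards [(hz.tendsto_infDist E).eventually (gt_mem_nhds hε)] with n hn
  simpa [dist_eq_norm] using (infDist_lt_iff ⟨0, E.zero_mem⟩).1 hn

theorem norm_add_smul_le_of_norm_le_one {E : Submodule ℝ X} {x h : X} {t B : ℝ}
    (hx : ‖x‖ = 1) (hB : 0 ≤ B) (hE : ∀ u ∈ E, ‖u‖ = 1 → ‖x + t • u‖ ≤ 1 + B)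
    (hh : h ∈ E) (hh1 : ‖h‖ ≤ 1) : ‖x + t • h‖ ≤ 1 + B := by
  rcases eq_or_ne h 0 with rfl | hh0
  · simp [hx, hB]
  set a := ‖h‖
  have ha : 0 ≤ a := norm_nonneg h
  have hu := hE (a⁻¹ • h) (E.smul_mem _ hh) (norm_smul_inv_norm hh0)
  have hsplit : x + t • h = (1 - a) • x + a • (x + t • (a⁻¹ • h)) := by
    rw [smul_add, smul_smul, smul_smul, mul_comm a t, mul_assoc,
      mul_inv_cancel₀ (norm_ne_zero_iff.2 hh0), mul_one, sub_smul, one_smul]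
    abel
  calc ‖x + t • h‖ ≤ (1 - a) * ‖x‖ + a * ‖x + t • (a⁻¹ • h)‖ := by
        rw [hsplit]
        exact (convexOn_norm convex_univ).2 (mem_univ _) (mem_univ _) (sub_nonneg.2 hh1) ha
          (by ring)
    _ ≤ (1 - a) * 1 + a * (1 + B) := by rw [hx]; gcongr
    _ ≤ 1 + B := by nlinarith

def ausModulusAt (x : X) (t : ℝ) : ℝ :=
  ⨅ E : {E : Submodule ℝ X // FiniteDimensional ℝ (X ⧸ E)},
    ⨆ h : {h : X // h ∈ E.1 ∧ ‖h‖ = 1}, (‖x + t • h.1‖ - 1)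

section ausModulusAt

variable {x : X} {t : ℝ}

theorem norm_add_smul_sub_one_le (hx : ‖x‖ = 1) (ht : 0 ≤ t) {h : X} (hh : ‖h‖ = 1) :
    ‖x + t • h‖ - 1 ≤ t := by
  have := norm_add_le x (t • h)
  rw [norm_smul, hh, hx, Real.norm_of_nonneg ht] at this
  linarith

theorem ausModulusAt_le (hx : ‖x‖ = 1) (ht : 0 ≤ t) : ausModulusAt x t ≤ t := by
  have hbdd : BddBelow (range fun E : {E : Submodule ℝ X // FiniteDimensional ℝ (X ⧸ E)} =>
      ⨆ h : {h : X // h ∈ E.1 ∧ ‖h‖ = 1}, (‖x + t • h.1‖ - 1)) := by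
    refine ⟨-1, forall_mem_range.2 fun E => ?_⟩
    rcases isEmpty_or_nonempty {h : X // h ∈ E.1 ∧ ‖h‖ = 1} with hE | ⟨⟨h⟩⟩
    · rw [Real.iSup_of_isEmpty]
      norm_num
    · refine le_ciSup_of_le ⟨t, forall_mem_range.2 fun h => ?_⟩ h ?_
      · exact norm_add_smul_sub_one_le hx ht h.2.2
      · linarith [norm_nonneg (x + t • h.1)]
  refine (ciInf_le hbdd ⟨⊤, inferInstance⟩).trans (Real.iSup_le (fun h => ?_) ht)
  exact norm_add_smul_sub_one_le hx ht h.2.2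

theorem ausModulusAt_le_ausModulus (hx : ‖x‖ = 1) (ht : 0 ≤ t) :
    ausModulusAt x t ≤ ausModulus X t :=
  le_ciSup (f := fun x : {x : X // ‖x‖ = 1} => ausModulusAt x.1 t)
    ⟨t, forall_mem_range.2 fun x => ausModulusAt_le x.2 ht⟩ ⟨x, hx⟩

theorem exists_finiteDimensional_quotient_norm_add_smul_le (hx : ‖x‖ = 1) (ht : 0 ≤ t) {M : ℝ}
    (hM : ausModulusAt x t < M) :
    ∃ E : Submodule ℝ X, FiniteDimensional ℝ (X ⧸ E) ∧
      ∀ h ∈ E, ‖h‖ = 1 → ‖x + t • h‖ ≤ 1 + M := by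
  have : Nonempty {E : Submodule ℝ X // FiniteDimensional ℝ (X ⧸ E)} := ⟨⟨⊤, inferInstance⟩⟩
  obtain ⟨⟨E, hE⟩, hEM⟩ := exists_lt_of_ciInf_lt hM
  refine ⟨E, hE, fun h hh hh1 => ?_⟩
  have := le_ciSup (f := fun h : {h : X // h ∈ E ∧ ‖h‖ = 1} => ‖x + t • h.1‖ - 1)
    ⟨t, forall_mem_range.2 fun h => norm_add_smul_sub_one_le hx ht h.2.2⟩ ⟨h, hh, hh1⟩
  linarith

end ausModulusAt

theorem eventually_norm_add_smul_le {x : X} (hx : ‖x‖ = 1) {t M ε : ℝ} (ht : 0 ≤ t)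
    (hM : ausModulus X t ≤ M) (hM0 : 0 ≤ M) (hε : 0 < ε) (hz1 : ∀ n, ‖z n‖ ≤ 1)
    (hz : WeaklyNull z) :
    ∀ᶠ n in atTop, ‖x + t • z n‖ ≤ 1 + M + ε := by
  obtain ⟨E, hE, hEM⟩ := exists_finiteDimensional_quotient_norm_add_smul_le hx ht
    ((ausModulusAt_le_ausModulus hx ht).trans_lt (by linarith : ausModulus X t < M + ε / 2))
  set r := ε / (4 * (t + 1)) with hr_def
  have hr : 0 < r := by positivity
  have htr : t * (2 * r) ≤ ε / 2 := by
    rw [hr_def, ← sub_nonneg]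
    field_simp
    linarith
  filter_upwards [hz.eventually_exists_mem_norm_sub_lt E hr] with n ⟨h, hh, hzh⟩
  obtain ⟨u, hu, hu1, hzu⟩ := E.exists_mem_norm_le_one_norm_sub_le (hz1 n) hh
  calc ‖x + t • z n‖ = ‖(x + t • u) + t • (z n - u)‖ := by rw [smul_sub]; abel_nf
    _ ≤ ‖x + t • u‖ + t * ‖z n - u‖ :=
      (norm_add_le _ _).trans_eq (by rw [norm_smul, Real.norm_of_nonneg ht])
    _ ≤ (1 + (M + ε / 2)) + t * (2 * r) := by
      gcongr
      · exact norm_add_smul_le_of_norm_le_one hx (by positivity) hEM hu hu1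
      · linarith
    _ ≤ 1 + M + ε := by linarith

theorem norm_add_smul_mul_norm (v w : X) (s : ℝ) :
    ‖v + (s * ‖v‖) • w‖ = ‖v‖ * ‖‖v‖⁻¹ • v + s • w‖ := by
  rcases eq_or_ne v 0 with rfl | hv
  · simp
  have hv' : ‖v‖ ≠ 0 := norm_ne_zero_iff.2 hv
  rw [show v + (s * ‖v‖) • w = ‖v‖ • (‖v‖⁻¹ • v + s • w) by
    rw [smul_add, smul_inv_smul₀ hv', smul_smul, mul_comm], norm_smul, norm_norm]

theorem eventually_norm_add_smul_le_of_ausModulus_le {p C δ : ℝ} (hp : 1 ≤ p) (hC : 0 ≤ C)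
    (hCb : ∀ t ∈ Icc (0:ℝ) 1, ausModulus X t ≤ C * t ^ p) (v : X) (hδ : 0 < δ)
    (hz1 : ∀ n, ‖z n‖ ≤ 1) (hz : WeaklyNull z) :
    ∀ᶠ n in atTop, ‖v + (δ ^ (1/p) * ‖v‖) • z n‖ ≤ (1 + (C + 1) * δ) * ‖v‖ := by
  set τ := δ ^ (1/p)
  have hτ : 0 ≤ τ := by positivity
  simp_rw [norm_add_smul_mul_norm, mul_comm _ ‖v‖]
  rcases eq_or_ne v 0 with rfl | hv
  · simp
  refine Eventually.mono ?_ fun n hn => mul_le_mul_of_nonneg_left hn (norm_nonneg v)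
  have hunit : ‖‖v‖⁻¹ • v‖ = 1 := norm_smul_inv_norm hv
  rcases le_or_gt 1 δ with hδ1 | hδ1
  · have hτδ : τ ≤ δ := by
      have h1p : 1 / p ≤ 1 := (div_le_one (by linarith)).2 hp
      simpa only [Real.rpow_one] using Real.rpow_le_rpow_of_exponent_le hδ1 h1p
    refine Eventually.of_forall fun n => ?_
    calc ‖‖v‖⁻¹ • v + τ • z n‖ ≤ ‖‖v‖⁻¹ • v‖ + τ * ‖z n‖ :=
          (norm_add_le _ _).trans_eq (by rw [norm_smul τ, Real.norm_of_nonneg hτ])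
      _ ≤ 1 + τ * 1 := by rw [hunit]; gcongr; exact hz1 n
      _ ≤ 1 + (C + 1) * δ := by nlinarith
  · have hτ1 : τ ≤ 1 := Real.rpow_le_one hδ.le hδ1.le (by positivity)
    have hτp : τ ^ p = δ := by
      rw [← Real.rpow_mul hδ.le, one_div_mul_cancel (by linarith), Real.rpow_one]
    have := eventually_norm_add_smul_le hunit hτ
      ((hCb τ ⟨hτ, hτ1⟩).trans_eq (by rw [hτp])) (by positivity) hδ hz1 hz
    exact this.mono fun n hn => hn.trans_eq (by ring)

theorem midpoint_add_mem_Mid {x y w : X} {d : ℝ}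
    (hx : ‖(2:ℝ)⁻¹ • (x - y) - w‖ ≤ (1 + d) * ‖(2:ℝ)⁻¹ • (x - y)‖)
    (hy : ‖(2:ℝ)⁻¹ • (x - y) + w‖ ≤ (1 + d) * ‖(2:ℝ)⁻¹ • (x - y)‖) :
    (2:ℝ)⁻¹ • (x + y) + w ∈ Mid x y d := by
  have hdist : dist x y = 2 * ‖(2:ℝ)⁻¹ • (x - y)‖ := by
    rw [dist_eq_norm, norm_smul, Real.norm_of_nonneg (by norm_num)]
    ring
  rw [Mid, mem_ofPred_eq, hdist, dist_eq_norm, dist_eq_norm,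
    show x - ((2:ℝ)⁻¹ • (x + y) + w) = (2:ℝ)⁻¹ • (x - y) - w by module,
    show y - ((2:ℝ)⁻¹ • (x + y) + w) = -((2:ℝ)⁻¹ • (x - y) + w) by module, norm_neg]
  exact max_le (by linarith) (by linarith)

end CLG

theorem mem_mid_of_asympPUnifSmooth_general
    {X : Type*} [NormedAddCommGroup X] [NormedSpace ℝ X]
    (p : ℝ) (hp : 1 < p) (hX : CLG.AsympPUnifSmooth X p) :
    ∃ c > (0:ℝ), ∀ (x y : X) (δ : ℝ), 0 < δ → ∀ z : ℕ → X,
      (∀ n, ‖z n‖ ≤ 1) → CLG.WeaklyNull z →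
      ∃ n₀ : ℕ, ∀ n > n₀,
        (2:ℝ)⁻¹ • (x + y) + (δ ^ (1/p) * ‖(2:ℝ)⁻¹ • (x - y)‖) • z n
          ∈ CLG.Mid x y (c * δ) := by
  obtain ⟨C, hC, hCb⟩ := hX
  refine ⟨C + 1, by positivity, fun x y δ hδ z hz1 hz => ?_⟩
  have hplus := eventually_norm_add_smul_le_of_ausModulus_le hp.le hC.le hCb
    ((2:ℝ)⁻¹ • (x - y)) hδ hz1 hz
  have hminus := eventually_norm_add_smul_le_of_ausModulus_le hp.le hC.le hCb
    ((2:ℝ)⁻¹ • (x - y)) hδ (z := -z) (fun n => by simpa using hz1 n) hz.neg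
  obtain ⟨n₀, hn₀⟩ := eventually_atTop.1 (hplus.and hminus)
  refine ⟨n₀, fun n hn => midpoint_add_mem_Mid ?_ (hn₀ n hn.le).1⟩
  simpa [sub_eq_add_neg] using (hn₀ n hn.le).2

/-- Approximate midpoints in asymptotically `p`-uniformly smooth spaces: for a weakly
null sequence `(x_n)` in the unit ball, `u + δ^{1/p}‖v‖ x_n` is eventually a
`cδ`-approximate midpoint of `x` and `y`. -/
theorem mem_mid_of_asympPUnifSmooth
    {X : Type*} [NormedAddCommGroup X] [NormedSpace ℝ X] [CompleteSpace X]
    (p : ℝ) (hp : 1 < p) (hX : CLG.AsympPUnifSmooth X p) :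
    ∃ c > (0:ℝ), ∀ (x y : X) (δ : ℝ), 0 < δ → ∀ z : ℕ → X,
      (∀ n, ‖z n‖ ≤ 1) → CLG.WeaklyNull z →
      ∃ n₀ : ℕ, ∀ n > n₀,
        (2:ℝ)⁻¹ • (x + y) + (δ ^ (1/p) * ‖(2:ℝ)⁻¹ • (x - y)‖) • z n
          ∈ CLG.Mid x y (c * δ) :=
  mem_mid_of_asympPUnifSmooth_general p hp hX
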